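/- Let Ω ⊂ ℝ² be the interior of the trapezoid with vertices (2,0), (3,1), (−2,1) and (−1,0). Let f be the geodesic line of (Ω, h_Ω) whose image is Ω ∩ {x = 1}, with f(0) = (1, 1/2) and lim_{t→+∞} f(t) = (1, 0), and let g be the geodesic line whose image is Ω ∩ {x = 0}, with g(0) = (0, 1/2) and lim_{t→+∞} g(t) = (0, 0). Then the distance function t ↦ h_Ω(f(t), g(t)) is not eventually convex: for every T ∈ ℝ, this function is not convex on [T, +∞). -/

import Mathlib

/-!
The trapezoid is `{0 < y < 1, x - y < 2, -1 < x + y}`. On a vertical chord `x = c`, `0 ≤ c ≤ 1`,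
the boundary points are `(c, 1)` and `(c, 0)`, so a geodesic through `(c, 1/2)` descending to
`(c, 0)` is eventually `t ↦ (c, 1 / (1 + eᵗ))`. Hence `f t` and `g t` eventually share a height
`y → 0`, on the horizontal chord from `(2 + y, y)` to `(-1 - y, y)`, and the cross ratio gives
`h(f t, g t) = 2 log ((2 + y) / (1 + y))`, which tends to `2 log 2` while staying below it.
A convex function `φ` on `[T, ∞)` never drops below its limit at `+∞` (let `m → ∞` in
`φ m ≤ (φ t + φ (2m - t)) / 2`), so the distance is not convex on any `[T, ∞)`.
-/

open Real Filter Set Metric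

/- The Hilbert distance on a (bounded open convex) domain `Ω` in Euclidean space:
for `p ≠ q` it is `log ((‖p' - q‖ * ‖q' - p‖) / (‖p' - p‖ * ‖q' - q‖))` where `p', q'`
are the two boundary points of the chord through `p` and `q`, labelled so that `p` lies
strictly between `p'` and `q`, and `q` lies strictly between `p` and `q'`. -/

open Classical in
noncomputable def hilbertDist {n : ℕ} (Ω : Set (EuclideanSpace ℝ (Fin n)))
    (p q : EuclideanSpace ℝ (Fin n)) : ℝ :=
  if _h : p = q then 0
  else Classical.epsilon fun d : ℝ =>
    ∃ p' q' : EuclideanSpace ℝ (Fin n), p' ∈ frontier Ω ∧ q' ∈ frontier Ω ∧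
      p ∈ openSegment ℝ p' q ∧ q ∈ openSegment ℝ p q' ∧
      d = Real.log ((‖p' - q‖ * ‖q' - p‖) / (‖p' - p‖ * ‖q' - q‖))

/-- A geodesic line of `(Ω, hilbertDist Ω)`: a map `f : ℝ → Ω` whose image lies on a
Euclidean line and which satisfies `hilbertDist Ω (f s) (f t) = |s - t|`. -/
def IsGeodesicLine {n : ℕ} (Ω : Set (EuclideanSpace ℝ (Fin n)))
    (f : ℝ → EuclideanSpace ℝ (Fin n)) : Prop :=
  (∀ t, f t ∈ Ω) ∧ Collinear ℝ (Set.range f) ∧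
    ∀ s t : ℝ, hilbertDist Ω (f s) (f t) = |s - t|

/-- The point `(a, b)` of the Euclidean plane. -/
noncomputable def pt (a b : ℝ) : EuclideanSpace ℝ (Fin 2) :=
  (EuclideanSpace.equiv (Fin 2) ℝ).symm ![a, b]

theorem AffineMap.lineMap_mem_openSegment_lineMap {𝕜 E : Type*} [Field 𝕜] [LinearOrder 𝕜]
    [IsStrictOrderedRing 𝕜] [AddCommGroup E] [Module 𝕜 E] (x y : E) {a b : 𝕜} (ha : 0 < a)
    (hab : a < b) : lineMap x y a ∈ openSegment 𝕜 x (lineMap x y b) := by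
  have hmem : a ∈ openSegment 𝕜 0 b := by
    rw [openSegment_eq_Ioo (ha.trans hab)]
    exact ⟨ha, hab⟩
  simpa using mem_image_of_mem (lineMap x y : 𝕜 →ᵃ[𝕜] E) hmem

theorem Convex.eq_of_mem_frontier_of_mem_openSegment {E : Type*} [NormedAddCommGroup E]
    [NormedSpace ℝ E] {Ω : Set E} (hΩ : Convex ℝ Ω) (hΩo : IsOpen Ω) {a b p q : E}
    (hq : q ∈ Ω) (ha : a ∈ frontier Ω) (hb : b ∈ frontier Ω)
    (hpa : p ∈ openSegment ℝ a q) (hpb : p ∈ openSegment ℝ b q) : a = b := by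
  obtain ⟨u, u', hu, -, huu, rfl⟩ := hpa
  obtain ⟨s, s', hs, -, hss, hp⟩ := hpb
  wlog hsu : s ≤ u generalizing a b u u' s s'
  · exact (this hb ha s s' hs hss u u' hu huu hp.symm (le_of_not_ge hsu)).symm
  obtain rfl : u' = 1 - u := by linarith
  obtain rfl : s' = 1 - s := by linarith
  have ha_eq : a = (s / u) • b + ((u - s) / u) • q := calc
    a = u⁻¹ • (u • a) := (inv_smul_smul₀ hu.ne' a).symm
    _ = u⁻¹ • (s • b + (u - s) • q) := by congr 1; linear_combination (norm := module) -hp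
    _ = (s / u) • b + ((u - s) / u) • q := by module
  rcases hsu.lt_or_eq with hlt | rfl
  · have hab : a ∈ openSegment ℝ b q :=
      ⟨s / u, (u - s) / u, by positivity, div_pos (by linarith) hu, by field_simp; ring,
        ha_eq.symm⟩
    have := hΩ.openSegment_closure_interior_subset_interior (frontier_subset_closure hb)
      (hΩo.interior_eq.symm ▸ hq) hab
    rw [hΩo.interior_eq] at this
    exact absurd this (hΩo.frontier_eq ▸ ha).2
  · simpa [hu.ne'] using ha_eq

section Hilbert

variable {n : ℕ} {Ω : Set (EuclideanSpace ℝ (Fin n))}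

open AffineMap

theorem hilbertDist_eq_log (hΩ : Convex ℝ Ω) (hΩo : IsOpen Ω)
    {p q p' q' : EuclideanSpace ℝ (Fin n)} (hp : p ∈ Ω) (hq : q ∈ Ω) (hpq : p ≠ q)
    (hp' : p' ∈ frontier Ω) (hq' : q' ∈ frontier Ω)
    (hpp' : p ∈ openSegment ℝ p' q) (hqq' : q ∈ openSegment ℝ p q') :
    hilbertDist Ω p q = log ((‖p' - q‖ * ‖q' - p‖) / (‖p' - p‖ * ‖q' - q‖)) := by
  rw [hilbertDist, dif_neg hpq]
  obtain ⟨a, b, ha, hb, hpa, hqb, hd⟩ := Classical.epsilon_spec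
    (p := fun d : ℝ => ∃ a b : EuclideanSpace ℝ (Fin n),
      a ∈ frontier Ω ∧ b ∈ frontier Ω ∧ p ∈ openSegment ℝ a q ∧ q ∈ openSegment ℝ p b ∧
      d = log ((‖a - q‖ * ‖b - p‖) / (‖a - p‖ * ‖b - q‖)))
    ⟨_, p', q', hp', hq', hpp', hqq', rfl⟩
  rw [openSegment_symm] at hqq' hqb
  rw [hd, hΩ.eq_of_mem_frontier_of_mem_openSegment hΩo hq ha hp' hpa hpp',
    hΩ.eq_of_mem_frontier_of_mem_openSegment hΩo hp hb hq' hqb hqq']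

theorem hilbertDist_lineMap (hΩ : Convex ℝ Ω) (hΩo : IsOpen Ω)
    {p' q' : EuclideanSpace ℝ (Fin n)} (hp' : p' ∈ frontier Ω) (hq' : q' ∈ frontier Ω)
    {a b : ℝ} (ha : 0 < a) (hab : a < b) (hb : b < 1)
    (hpΩ : lineMap p' q' a ∈ Ω) (hqΩ : lineMap p' q' b ∈ Ω) :
    hilbertDist Ω (lineMap p' q' a) (lineMap p' q' b) = log (b * (1 - a) / (a * (1 - b))) := by
  have hne : p' ≠ q' := by
    rintro rfl
    rw [lineMap_same_apply] at hpΩ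
    exact (hΩo.frontier_eq ▸ hp').2 hpΩ
  have hpq' : lineMap q' p' (1 - b) ∈ openSegment ℝ q' (lineMap q' p' (1 - a)) :=
    lineMap_mem_openSegment_lineMap q' p' (by linarith) (by linarith)
  rw [lineMap_apply_one_sub, lineMap_apply_one_sub, openSegment_symm] at hpq'
  rw [hilbertDist_eq_log hΩ hΩo hpΩ hqΩ ((lineMap_injective ℝ hne).ne hab.ne) hp' hq'
    (lineMap_mem_openSegment_lineMap p' q' ha hab) hpq']
  simp only [← dist_eq_norm, dist_left_lineMap, dist_right_lineMap, Real.norm_eq_abs,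
    Real.dist_eq]
  have hd : dist p' q' ≠ 0 := dist_ne_zero.2 hne
  rw [abs_of_pos ha, abs_of_pos (ha.trans hab), abs_of_pos (by linarith : 0 < 1 - a),
    abs_of_pos (by linarith : 0 < 1 - b)]
  congr 1
  field_simp

end Hilbert

theorem ConvexOn.le_of_tendsto_atTop {f : ℝ → ℝ} {T L : ℝ} (hf : ConvexOn ℝ (Ici T) f)
    (hL : Tendsto f atTop (nhds L)) {t : ℝ} (ht : T ≤ t) : L ≤ f t := by
  have hmid : ∀ m ≥ t, f m ≤ (f t + f (2 * m - t)) / 2 := by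
    intro m hm
    have := hf.2 ht (show T ≤ 2 * m - t by linarith) (by norm_num : (0 : ℝ) ≤ 1 / 2)
      (by norm_num : (0 : ℝ) ≤ 1 / 2) (by norm_num)
    simp only [smul_eq_mul] at this
    calc f m = f (1 / 2 * t + 1 / 2 * (2 * m - t)) := by congr 1; ring
      _ ≤ 1 / 2 * f t + 1 / 2 * f (2 * m - t) := this
      _ = (f t + f (2 * m - t)) / 2 := by ring
  have hreflect : Tendsto (fun m : ℝ => 2 * m - t) atTop atTop :=
    tendsto_atTop_add_const_right _ _ (tendsto_id.const_mul_atTop two_pos)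
  have hlim := ((hL.comp hreflect).const_add (f t)).div_const 2
  have := le_of_tendsto_of_tendsto hL hlim ((eventually_ge_atTop t).mono hmid)
  linarith

theorem not_convexOn_Ici_of_tendsto_of_eventually_lt {f : ℝ → ℝ} {L : ℝ}
    (hL : Tendsto f atTop (nhds L)) (hlt : ∀ᶠ t in atTop, f t < L) (T : ℝ) :
    ¬ ConvexOn ℝ (Ici T) f := fun hf =>
  let ⟨_, htT, ht⟩ := ((eventually_ge_atTop T).and hlt).exists
  (hf.le_of_tendsto_atTop hL htT).not_gt ht

@[simp] theorem pt_apply_zero (a b : ℝ) : pt a b 0 = a := rfl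

@[simp] theorem pt_apply_one (a b : ℝ) : pt a b 1 = b := rfl

theorem eq_pt (z : EuclideanSpace ℝ (Fin 2)) : z = pt (z 0) (z 1) := by
  ext i; fin_cases i <;> rfl

open AffineMap in
theorem lineMap_pt (a b c d s : ℝ) :
    lineMap (pt a b) (pt c d) s = pt (a + s * (c - a)) (b + s * (d - b)) := by
  ext i; fin_cases i <;> simp [lineMap_apply_module'] <;> ring

def trapezoid : Set (EuclideanSpace ℝ (Fin 2)) :=
  {z | 0 ≤ z 1 ∧ z 1 ≤ 1 ∧ z 0 - z 1 ≤ 2 ∧ -1 ≤ z 0 + z 1}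

def openTrapezoid : Set (EuclideanSpace ℝ (Fin 2)) :=
  {z | 0 < z 1 ∧ z 1 < 1 ∧ z 0 - z 1 < 2 ∧ -1 < z 0 + z 1}

section Halfplanes

local notation "coord" => EuclideanSpace.proj (𝕜 := ℝ) (ι := Fin 2)

theorem trapezoid_eq_preimage : trapezoid =
    coord 1 ⁻¹' Ici 0 ∩ (coord 1 ⁻¹' Iic 1 ∩
      ((coord 0 - coord 1) ⁻¹' Iic 2 ∩ (coord 0 + coord 1) ⁻¹' Ici (-1))) := rfl

theorem convex_trapezoid : Convex ℝ trapezoid := by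
  rw [trapezoid_eq_preimage]
  exact ((convex_Ici _).linear_preimage _).inter (((convex_Iic _).linear_preimage _).inter
    (((convex_Iic _).linear_preimage _).inter ((convex_Ici _).linear_preimage _)))

theorem isClosed_trapezoid : IsClosed trapezoid := by
  rw [trapezoid_eq_preimage]
  exact (isClosed_Ici.preimage (map_continuous _)).inter ((isClosed_Iic.preimage
    (map_continuous _)).inter ((isClosed_Iic.preimage (map_continuous _)).inter
      (isClosed_Ici.preimage (map_continuous _))))

theorem interior_trapezoid : interior trapezoid = openTrapezoid := by
  have h₁ : Function.Surjective (coord 1) := fun r => ⟨pt 0 r, rfl⟩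
  have h₂ : Function.Surjective (coord 0 - coord 1) := fun r => ⟨pt r 0, by simp⟩
  have h₃ : Function.Surjective (coord 0 + coord 1) := fun r => ⟨pt r 0, by simp⟩
  rw [trapezoid_eq_preimage]
  simp only [interior_inter, ContinuousLinearMap.interior_preimage _ h₁,
    ContinuousLinearMap.interior_preimage _ h₂, ContinuousLinearMap.interior_preimage _ h₃,
    interior_Ici, interior_Iic]
  rfl

end Halfplanes

open AffineMap in
theorem convexHull_trapezoid_vertices :
    convexHull ℝ {pt 2 0, pt 3 1, pt (-2) 1, pt (-1) 0} = trapezoid := by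
  refine (convexHull_min ?_ convex_trapezoid).antisymm ?_
  · simp [insert_subset_iff, trapezoid]
    norm_num
  rintro z ⟨h0, h1, h2, h3⟩
  have hL : pt (-1 - z 1) (z 1) ∈ convexHull ℝ {pt 2 0, pt 3 1, pt (-2) 1, pt (-1) 0} := by
    refine segment_subset_convexHull (x := pt (-1) 0) (y := pt (-2) 1) (by simp) (by simp) ?_
    convert lineMap_mem_segment ℝ _ _ ⟨h0, h1⟩ using 1
    rw [lineMap_pt]; congr 1 <;> ring
  have hR : pt (2 + z 1) (z 1) ∈ convexHull ℝ {pt 2 0, pt 3 1, pt (-2) 1, pt (-1) 0} := by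
    refine segment_subset_convexHull (x := pt 2 0) (y := pt 3 1) (by simp) (by simp) ?_
    convert lineMap_mem_segment ℝ _ _ ⟨h0, h1⟩ using 1
    rw [lineMap_pt]; congr 1 <;> ring
  have hpos : 0 < 3 + 2 * z 1 := by linarith
  refine (convex_convexHull ℝ _).segment_subset hL hR ?_
  convert lineMap_mem_segment ℝ _ _ (t := (z 0 + 1 + z 1) / (3 + 2 * z 1))
    ⟨div_nonneg (by linarith) hpos.le, (div_le_one hpos).2 (by linarith)⟩ using 1
  refine (eq_pt z).trans ?_
  rw [lineMap_pt]
  congr 1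
  · field_simp
    ring
  · ring

theorem isOpen_openTrapezoid : IsOpen openTrapezoid :=
  interior_trapezoid ▸ isOpen_interior

theorem convex_openTrapezoid : Convex ℝ openTrapezoid :=
  interior_trapezoid ▸ convex_trapezoid.interior

theorem mem_frontier_openTrapezoid {z : EuclideanSpace ℝ (Fin 2)} :
    z ∈ frontier openTrapezoid ↔ z ∈ trapezoid ∧ z ∉ openTrapezoid := by
  have hne : (interior trapezoid).Nonempty :=
    ⟨pt 0 (1 / 2), interior_trapezoid ▸ by norm_num [openTrapezoid]⟩
  rw [isOpen_openTrapezoid.frontier_eq, ← interior_trapezoid,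
    convex_trapezoid.closure_interior_eq_closure_of_nonempty_interior hne,
    isClosed_trapezoid.closure_eq]
  rfl

theorem pt_mem_trapezoid {x y : ℝ} :
    pt x y ∈ trapezoid ↔ 0 ≤ y ∧ y ≤ 1 ∧ x - y ≤ 2 ∧ -1 ≤ x + y := Iff.rfl

theorem pt_mem_openTrapezoid {x y : ℝ} :
    pt x y ∈ openTrapezoid ↔ 0 < y ∧ y < 1 ∧ x - y < 2 ∧ -1 < x + y := Iff.rfl

open AffineMap in
theorem hilbertDist_openTrapezoid_vertical {c a b : ℝ} (hc0 : 0 ≤ c) (hc1 : c ≤ 1)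
    (hb : 0 < b) (hba : b < a) (ha : a < 1) :
    hilbertDist openTrapezoid (pt c a) (pt c b) = log (a * (1 - b) / ((1 - a) * b)) := by
  have htop : pt c 1 ∈ frontier openTrapezoid := mem_frontier_openTrapezoid.2
    ⟨pt_mem_trapezoid.2 ⟨zero_le_one, le_rfl, by linarith, by linarith⟩,
      fun h => (pt_mem_openTrapezoid.1 h).2.1.false⟩
  have hbot : pt c 0 ∈ frontier openTrapezoid := mem_frontier_openTrapezoid.2
    ⟨pt_mem_trapezoid.2 ⟨le_rfl, zero_le_one, by linarith, by linarith⟩,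
      fun h => (pt_mem_openTrapezoid.1 h).1.false⟩
  have hchord : ∀ s, pt c s = lineMap (pt c 1) (pt c 0) (1 - s) := fun s => by
    rw [lineMap_pt]; congr 1 <;> ring
  have := hilbertDist_lineMap convex_openTrapezoid isOpen_openTrapezoid htop hbot
    (a := 1 - a) (b := 1 - b) (by linarith) (by linarith) (by linarith)
    (hchord a ▸ pt_mem_openTrapezoid.2 ⟨by linarith, ha, by linarith, by linarith⟩)
    (hchord b ▸ pt_mem_openTrapezoid.2 ⟨hb, by linarith, by linarith, by linarith⟩)
  rw [← hchord, ← hchord, sub_sub_cancel, sub_sub_cancel] at this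
  rw [this, mul_comm a]

open AffineMap in
theorem hilbertDist_openTrapezoid_horizontal {y : ℝ} (hy0 : 0 < y) (hy1 : y < 1) :
    hilbertDist openTrapezoid (pt 1 y) (pt 0 y) = 2 * log ((2 + y) / (1 + y)) := by
  have hright : pt (2 + y) y ∈ frontier openTrapezoid := mem_frontier_openTrapezoid.2
    ⟨pt_mem_trapezoid.2 ⟨hy0.le, hy1.le, by linarith, by linarith⟩,
      fun h => (pt_mem_openTrapezoid.1 h).2.2.1.ne (by ring)⟩
  have hleft : pt (-1 - y) y ∈ frontier openTrapezoid := mem_frontier_openTrapezoid.2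
    ⟨pt_mem_trapezoid.2 ⟨hy0.le, hy1.le, by linarith, by linarith⟩,
      fun h => (pt_mem_openTrapezoid.1 h).2.2.2.ne' (by ring)⟩
  have hpos : 0 < 3 + 2 * y := by linarith
  have h1y : 0 < 1 + y := by linarith
  have hp : pt 1 y = lineMap (pt (2 + y) y) (pt (-1 - y) y) ((1 + y) / (3 + 2 * y)) := by
    rw [lineMap_pt]; congr 1 <;> field_simp <;> ring
  have hq : pt 0 y = lineMap (pt (2 + y) y) (pt (-1 - y) y) ((2 + y) / (3 + 2 * y)) := by
    rw [lineMap_pt]; congr 1 <;> field_simp <;> ring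
  have := hilbertDist_lineMap convex_openTrapezoid isOpen_openTrapezoid hright hleft
    (div_pos h1y hpos) (by gcongr; linarith) ((div_lt_one hpos).2 (by linarith))
    (hp ▸ pt_mem_openTrapezoid.2 ⟨hy0, hy1, by linarith, by linarith⟩)
    (hq ▸ pt_mem_openTrapezoid.2 ⟨hy0, hy1, by linarith, by linarith⟩)
  rw [← hp, ← hq] at this
  have h1 : 1 - (1 + y) / (3 + 2 * y) = (2 + y) / (3 + 2 * y) := by field_simp; ring
  have h2 : 1 - (2 + y) / (3 + 2 * y) = (1 + y) / (3 + 2 * y) := by field_simp; ring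
  rw [this, h1, h2, ← Nat.cast_ofNat, ← log_pow]
  congr 1
  field_simp

theorem IsGeodesicLine.eventually_eq_pt {u : ℝ → EuclideanSpace ℝ (Fin 2)} {c : ℝ}
    (hu : IsGeodesicLine openTrapezoid u) (hc0 : 0 ≤ c) (hc1 : c ≤ 1) (hx : ∀ t, u t 0 = c)
    (hu0 : u 0 = pt c (1 / 2)) (hlim : Tendsto u atTop (nhds (pt c 0))) :
    ∀ᶠ t in atTop, u t = pt c (1 / (1 + exp t)) := by
  obtain ⟨hmem, -, hdist⟩ := hu
  have hy : Tendsto (fun t => u t 1) atTop (nhds 0) :=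
    ((EuclideanSpace.proj (𝕜 := ℝ) (1 : Fin 2)).continuous.tendsto _).comp hlim
  filter_upwards [hy.eventually_lt_const one_half_pos, eventually_gt_atTop 0] with t hsmall ht
  set y := u t 1
  have hut : u t = pt c y := (eq_pt _).trans (by rw [hx])
  have hy0 : 0 < y := (hmem t).1
  have key := hdist 0 t
  rw [hu0, hut, hilbertDist_openTrapezoid_vertical hc0 hc1 hy0 hsmall one_half_lt_one,
    zero_sub, abs_neg, abs_of_pos ht] at key
  have hratio : 1 / 2 * (1 - y) / ((1 - 1 / 2) * y) = exp t := by
    rw [← key, exp_log (div_pos (by linarith) (by linarith))]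
  rw [hut]
  congr 1
  field_simp at hratio ⊢
  linarith

theorem tendsto_one_div_one_add_exp_atTop :
    Tendsto (fun t : ℝ => 1 / (1 + exp t)) atTop (nhds 0) :=
  tendsto_const_nhds.div_atTop (tendsto_atTop_add_const_left _ 1 tendsto_exp_atTop)

theorem log_two_add_div_one_add_lt {y : ℝ} (hy : 0 < y) : log ((2 + y) / (1 + y)) < log 2 :=
  log_lt_log (by positivity) ((div_lt_iff₀ (by positivity)).2 (by linarith))

theorem trapezoid_disjoint_geodesics_not_eventually_convex
    (Ω : Set (EuclideanSpace ℝ (Fin 2)))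
    (hΩ : Ω = interior (convexHull ℝ
      ({pt 2 0, pt 3 1, pt (-2) 1, pt (-1) 0} : Set (EuclideanSpace ℝ (Fin 2)))))
    (f g : ℝ → EuclideanSpace ℝ (Fin 2))
    (hf : IsGeodesicLine Ω f) (hg : IsGeodesicLine Ω g)
    (hfim : Set.range f = Ω ∩ {z : EuclideanSpace ℝ (Fin 2) | z 0 = 1})
    (hf0 : f 0 = pt 1 (1 / 2))
    (hflim : Filter.Tendsto f Filter.atTop (nhds (pt 1 0)))
    (hgim : Set.range g = Ω ∩ {z : EuclideanSpace ℝ (Fin 2) | z 0 = 0})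
    (hg0 : g 0 = pt 0 (1 / 2))
    (hglim : Filter.Tendsto g Filter.atTop (nhds (pt 0 0))) :
    ∀ T : ℝ, ¬ ConvexOn ℝ (Set.Ici T) (fun t => hilbertDist Ω (f t) (g t)) := by
  intro T
  rw [convexHull_trapezoid_vertices, interior_trapezoid] at hΩ
  subst hΩ
  have hf' := hf.eventually_eq_pt zero_le_one le_rfl (fun t => (hfim ▸ mem_range_self t).2)
    hf0 hflim
  have hg' := hg.eventually_eq_pt le_rfl zero_le_one (fun t => (hgim ▸ mem_range_self t).2)
    hg0 hglim
  set σ : ℝ → ℝ := fun t => 1 / (1 + exp t)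
  have hD : (fun t => hilbertDist openTrapezoid (f t) (g t)) =ᶠ[atTop]
      fun t => 2 * log ((2 + σ t) / (1 + σ t)) := by
    filter_upwards [hf', hg'] with t hft hgt
    have hσ : σ t < 1 := (div_lt_one (by positivity)).2 (by linarith [exp_pos t])
    rw [hft, hgt, hilbertDist_openTrapezoid_horizontal (by positivity) hσ]
  refine not_convexOn_Ici_of_tendsto_of_eventually_lt (L := 2 * log 2) ?_ ?_ T
  · have hcont : ContinuousAt (fun y : ℝ => 2 * log ((2 + y) / (1 + y))) 0 := by
      fun_prop (disch := norm_num)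
    have hvalue : 2 * log ((2 + 0) / (1 + 0)) = 2 * log 2 := by norm_num
    exact (hvalue ▸ hcont.tendsto.comp tendsto_one_div_one_add_exp_atTop).congr' hD.symm
  · filter_upwards [hD] with t ht
    rw [ht]
    linarith [log_two_add_div_one_add_lt (show 0 < σ t by positivity)]
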